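/- arXiv:math/0604187 — 5 statements merged into one kernel-verified Lean document; each statement's English description precedes it below -/
import Mathlib

section
/- Let X be a metric space equipped with a convex bicombing, and let C ⊆ X be a compact convex subset. Then C is the closed convex hull of the set of its extremal points, i.e. C equals the smallest closed convex subset of X containing all extremal points of C. -/
open Set

/-- A convex bicombing on a metric space `X`: for each pair of points `x, y` a
continuous path `path x y : [0,1] → X` from `x` to `y`, with `path x x ≡ x`,
such that distances between paths are convex functions of the parameter. -/
structure ConvexBicombing (X : Type*) [MetricSpace X] where
  path : X → X → ℝ → X
  continuousOn : ∀ x y : X, ContinuousOn (path x y) (Icc 0 1)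
  path_zero : ∀ x y : X, path x y 0 = x
  path_one : ∀ x y : X, path x y 1 = y
  path_self : ∀ x : X, ∀ t ∈ Icc (0:ℝ) 1, path x x t = x
  dist_convexOn : ∀ x y x' y' : X,
    ConvexOn ℝ (Icc (0:ℝ) 1) (fun t => dist (path x y t) (path x' y' t))

/-- A set is convex with respect to the bicombing if it contains the path
between any two of its points. -/
def ConvexBicombing.IsConvexSet {X : Type*} [MetricSpace X] (B : ConvexBicombing X)
    (C : Set X) : Prop :=
  ∀ x ∈ C, ∀ y ∈ C, ∀ t ∈ Icc (0:ℝ) 1, B.path x y t ∈ C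

/-- `E` is an extremal subset of the convex set `C`: it is closed, nonempty,
contained in `C`, and whenever a path between points of `C` meets `E` at an
interior parameter, the whole path lies in `E`. -/
def ConvexBicombing.IsExtremal {X : Type*} [MetricSpace X] (B : ConvexBicombing X)
    (C E : Set X) : Prop :=
  IsClosed E ∧ E.Nonempty ∧ E ⊆ C ∧
    ∀ x ∈ C, ∀ y ∈ C, (∃ t ∈ Ioo (0:ℝ) 1, B.path x y t ∈ E) →
      ∀ s ∈ Icc (0:ℝ) 1, B.path x y s ∈ E

section KreinMilmanAux

open Metric

variable {X : Type*} [MetricSpace X] {B : ConvexBicombing X} {C : Set X}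

/-- A (closed) face of `C`: nonempty closed subset such that whenever a path between
points of `C` meets it at an interior time, both endpoints belong to it. -/
def ConvexBicombing.IsFace (B : ConvexBicombing X) (C E : Set X) : Prop :=
  IsClosed E ∧ E.Nonempty ∧ E ⊆ C ∧
    ∀ x ∈ C, ∀ y ∈ C, (∃ t ∈ Ioo (0:ℝ) 1, B.path x y t ∈ E) → x ∈ E ∧ y ∈ E

lemma conical_bound (x y p q : X) {t : ℝ} (ht : t ∈ Icc (0:ℝ) 1) :
    dist (B.path x y t) (B.path p q t) ≤ (1 - t) * dist x p + t * dist y q := by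
  have h := (B.dist_convexOn x y p q).2 (left_mem_Icc.mpr zero_le_one)
    (right_mem_Icc.mpr zero_le_one) (by linarith [ht.2] : (0:ℝ) ≤ 1 - t) ht.1 (by ring)
  simpa [B.path_zero, B.path_one, smul_eq_mul] using h

lemma dist_pt_bound (x y p : X) {t : ℝ} (ht : t ∈ Icc (0:ℝ) 1) :
    dist (B.path x y t) p ≤ (1 - t) * dist x p + t * dist y p := by
  have h := conical_bound (B := B) x y p p ht
  rwa [B.path_self p t ht] at h

lemma infDist_path_le {D : Set X} (hD : B.IsConvexSet D) (hDne : D.Nonempty)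
    (x y : X) {t : ℝ} (ht : t ∈ Icc (0:ℝ) 1) :
    infDist (B.path x y t) D ≤ (1 - t) * infDist x D + t * infDist y D := by
  refine le_of_forall_pos_le_add fun ε hε => ?_
  obtain ⟨p, hp, hxp⟩ := (infDist_lt_iff hDne).1
    (lt_add_of_pos_right (infDist x D) (half_pos hε))
  obtain ⟨q, hq, hyq⟩ := (infDist_lt_iff hDne).1
    (lt_add_of_pos_right (infDist y D) (half_pos hε))
  have h1 : infDist (B.path x y t) D ≤ dist (B.path x y t) (B.path p q t) :=
    infDist_le_dist_of_mem (hD p hp q hq t ht)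
  have h2 := conical_bound (B := B) x y p q ht
  have h3 := mul_le_mul_of_nonneg_left hxp.le (by linarith [ht.2] : (0:ℝ) ≤ 1 - t)
  have h4 := mul_le_mul_of_nonneg_left hyq.le ht.1
  nlinarith [ht.1, ht.2]

/-- The set of maximizers over a face, of a function concave-ish along paths,
is again a face. -/
lemma argmax_face (hC : IsCompact C) {E : Set X} (hE : B.IsFace C E) {f : X → ℝ}
    (hf : Continuous f)
    (hconc : ∀ x y : X, ∀ t ∈ Ioo (0:ℝ) 1, f (B.path x y t) ≤ (1 - t) * f x + t * f y) :
    B.IsFace C {y ∈ E | ∀ z ∈ E, f z ≤ f y} := by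
  obtain ⟨hEcl, hEne, hEC, hEface⟩ := hE
  have hEcomp : IsCompact E := hC.of_isClosed_subset hEcl hEC
  obtain ⟨y₀, hy₀E, hy₀⟩ := hEcomp.exists_isMaxOn hEne hf.continuousOn
  refine ⟨?_, ⟨y₀, hy₀E, fun z hz => hy₀ hz⟩, fun y hy => hEC hy.1, ?_⟩
  · have heq : {y ∈ E | ∀ z ∈ E, f z ≤ f y} = E ∩ ⋂ z ∈ E, {y | f z ≤ f y} := by
      ext y; simp [mem_iInter]
    rw [heq]
    exact hEcl.inter (isClosed_biInter fun z _ => isClosed_le continuous_const hf)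
  · rintro x hx y hy ⟨t, ht, hmem⟩
    obtain ⟨hxE, hyE⟩ := hEface x hx y hy ⟨t, ht, hmem.1⟩
    have h1 := hconc x y t ht
    have h2 := hmem.2 x hxE
    have h3 := hmem.2 y hyE
    have hfx : f (B.path x y t) ≤ f x := by nlinarith [ht.1, ht.2]
    have hfy : f (B.path x y t) ≤ f y := by nlinarith [ht.1, ht.2]
    exact ⟨⟨hxE, fun z hz => (hmem.2 z hz).trans hfx⟩,
           ⟨hyE, fun z hz => (hmem.2 z hz).trans hfy⟩⟩

/-- Every face of a compact convex set contains an extremal point. -/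
lemma exists_extreme_in_face (hC : IsCompact C) {F : Set X} (hF : B.IsFace C F) :
    ∃ p ∈ F, B.IsExtremal C {p} := by
  classical
  set S : Set (Set X) := {E | B.IsFace C E ∧ E ⊆ F} with hS
  have hzorn : ∀ c ⊆ S, IsChain (· ⊆ ·) c → c.Nonempty → ∃ lb ∈ S, ∀ s ∈ c, lb ⊆ s := by
    rintro c hcS hchain ⟨E₀, hE₀⟩
    have hne : (⋂₀ c).Nonempty := by
      have hni : Nonempty c := ⟨⟨E₀, hE₀⟩⟩
      have hdir : Directed (· ⊇ ·) (fun E : c => (E : Set X)) := by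
        rintro ⟨a, ha⟩ ⟨b, hb⟩
        rcases eq_or_ne a b with rfl | hab
        · exact ⟨⟨a, ha⟩, subset_rfl, subset_rfl⟩
        · rcases hchain ha hb hab with h | h
          · exact ⟨⟨a, ha⟩, subset_rfl, h⟩
          · exact ⟨⟨b, hb⟩, h, subset_rfl⟩
      have := IsCompact.nonempty_iInter_of_directed_nonempty_isCompact_isClosed
        (fun E : c => (E : Set X)) hdir (fun E => ((hcS E.2).1).2.1)
        (fun E => hC.of_isClosed_subset ((hcS E.2).1).1 ((hcS E.2).1).2.2.1)
        (fun E => ((hcS E.2).1).1)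
      rwa [sInter_eq_iInter]
    refine ⟨⋂₀ c, ⟨⟨isClosed_sInter fun E hE => ((hcS hE).1).1, hne,
      (sInter_subset_of_mem hE₀).trans ((hcS hE₀).1).2.2.1, ?_⟩,
      (sInter_subset_of_mem hE₀).trans (hcS hE₀).2⟩, fun s hs => sInter_subset_of_mem hs⟩
    rintro x hx y hy ⟨t, ht, hmem⟩
    constructor
    · rw [mem_sInter]; intro E hE
      exact (((hcS hE).1).2.2.2 x hx y hy ⟨t, ht, (sInter_subset_of_mem hE) hmem⟩).1
    · rw [mem_sInter]; intro E hE
      exact (((hcS hE).1).2.2.2 x hx y hy ⟨t, ht, (sInter_subset_of_mem hE) hmem⟩).2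
  obtain ⟨m, hmF, hmin⟩ := zorn_superset_nonempty S hzorn F ⟨hF, subset_rfl⟩
  have hmface : B.IsFace C m := hmin.1.1
  obtain ⟨p, hpm⟩ := hmface.2.1
  -- refine m to the argmax of `dist · p`
  set E' : Set X := {y ∈ m | ∀ z ∈ m, dist z p ≤ dist y p} with hE'
  have hE'face : B.IsFace C E' :=
    argmax_face hC hmface (continuous_id.dist continuous_const)
      (fun x y t ht => dist_pt_bound x y p (Ioo_subset_Icc_self ht))
  have hE'sub : E' ⊆ m := fun y hy => hy.1
  have hE'eq : m ⊆ E' := hmin.2 ⟨hE'face, hE'sub.trans hmin.1.2⟩ hE'sub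
  have hsingle : ∀ z ∈ m, z = p := by
    intro z hz
    have := (hE'eq hpm).2 z hz
    simpa [dist_le_zero] using this
  have hmeq : m = {p} := Subset.antisymm (fun z hz => hsingle z hz) (by simpa using hpm)
  refine ⟨p, hmin.1.2 hpm, isClosed_singleton, singleton_nonempty p,
    by simpa using hmface.2.2.1 hpm, ?_⟩
  rintro x hx y hy ⟨t, ht, hmem⟩ s hs
  have hxy := hmface.2.2.2 x hx y hy ⟨t, ht, by rw [hmeq]; exact hmem⟩
  have hx' : x = p := hsingle x hxy.1
  have hy' : y = p := hsingle y hxy.2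
  rw [hx', hy']
  simp [B.path_self p s hs]

end KreinMilmanAux

open Metric

/-- Kreĭn-Mil'man for metric spaces with a convex bicombing: a compact convex
set is the smallest closed convex set containing its extremal points. -/
theorem krein_milman_bicombing {X : Type*} [MetricSpace X] (B : ConvexBicombing X)
    (C : Set X) (hC : IsCompact C) (hCconv : B.IsConvexSet C) :
    C = ⋂₀ {D : Set X | IsClosed D ∧ B.IsConvexSet D ∧
      {p : X | p ∈ C ∧ B.IsExtremal C {p}} ⊆ D} := by
  apply Subset.antisymm
  · intro x hx
    rw [mem_sInter]
    rintro D ⟨hDcl, hDconv, hDext⟩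
    by_contra hxD
    have hCne : C.Nonempty := ⟨x, hx⟩
    have hCface : B.IsFace C C := ⟨hC.isClosed, hCne, subset_rfl, fun a ha b hb _ => ⟨ha, hb⟩⟩
    obtain ⟨p₀, hp₀C, hp₀ext⟩ := exists_extreme_in_face hC hCface
    have hDne : D.Nonempty := ⟨p₀, hDext ⟨hp₀C, hp₀ext⟩⟩
    have hfcont : Continuous fun y : X => infDist y D := continuous_infDist_pt D
    have hconc : ∀ a b : X, ∀ t ∈ Ioo (0:ℝ) 1,
        infDist (B.path a b t) D ≤ (1 - t) * infDist a D + t * infDist b D :=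
      fun a b t ht => infDist_path_le hDconv hDne a b (Ioo_subset_Icc_self ht)
    have hFface := argmax_face hC hCface hfcont hconc
    obtain ⟨p, hpF, hpext⟩ := exists_extreme_in_face hC hFface
    have hpD : p ∈ D := hDext ⟨hpF.1, hpext⟩
    have h1 : infDist x D ≤ infDist p D := hpF.2 x hx
    have h2 : infDist p D = 0 := infDist_zero_of_mem hpD
    have h3 : 0 < infDist x D := (hDcl.notMem_iff_infDist_pos hDne).1 hxD
    linarith
  · exact sInter_subset_of_mem ⟨hC.isClosed, hCconv, fun p hp => hp.1⟩
end

section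
/- Let X be a metric space equipped with a convex bicombing and let C ⊆ X be a compact convex subset. Then every extremal subset of C contains a minimal extremal subset, i.e. an extremal subset E' ⊆ E such that no proper subset of E' is extremal in C. -/
open Set

/-- In a compact convex subset of a metric space with convex bicombing, every
extremal subset contains a minimal extremal subset. -/
theorem extremal_contains_minimal_extremal {X : Type*} [MetricSpace X]
    (B : ConvexBicombing X) (C : Set X) (hC : IsCompact C) (hCconv : B.IsConvexSet C)
    (E : Set X) (hE : B.IsExtremal C E) :
    ∃ E' ⊆ E, B.IsExtremal C E' ∧
      ∀ F : Set X, B.IsExtremal C F → F ⊆ E' → F = E' := by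
  set S : Set (Set X) := {F | B.IsExtremal C F ∧ F ⊆ E} with hS
  have key : ∀ c ⊆ S, IsChain (· ⊆ ·) c → c.Nonempty → ∃ lb ∈ S, ∀ s ∈ c, lb ⊆ s := by
    intro c hcS hchain hcne
    haveI : Nonempty c := hcne.to_subtype
    have hdir : DirectedOn (· ⊇ ·) c := by
      intro a ha b hb
      rcases hchain.total ha hb with h | h
      · exact ⟨a, ha, le_refl _, h⟩
      · exact ⟨b, hb, h, le_refl _⟩
    have hclosed : ∀ F ∈ c, IsClosed F := fun F hF => ((hcS hF).1).1
    have hne : ∀ F ∈ c, F.Nonempty := fun F hF => ((hcS hF).1).2.1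
    have hsubC : ∀ F ∈ c, F ⊆ C := fun F hF => ((hcS hF).1).2.2.1
    have hcomp : ∀ F ∈ c, IsCompact F := fun F hF =>
      (hC.of_isClosed_subset (hclosed F hF) (hsubC F hF))
    have hInterNe : (⋂₀ c).Nonempty :=
      IsCompact.nonempty_sInter_of_directed_nonempty_isCompact_isClosed hdir hne hcomp hclosed
    obtain ⟨F₀, hF₀⟩ := hcne
    refine ⟨⋂₀ c, ⟨⟨isClosed_sInter hclosed, hInterNe,
        (sInter_subset_of_mem hF₀).trans (hsubC F₀ hF₀), ?_⟩,
        (sInter_subset_of_mem hF₀).trans (hcS hF₀).2⟩, fun s hs => sInter_subset_of_mem hs⟩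
    intro x hx y hy ⟨t, ht, htmem⟩ s hsIcc
    intro F hF
    exact ((hcS hF).1).2.2.2 x hx y hy ⟨t, ht, htmem F hF⟩ s hsIcc
  obtain ⟨m, hmE, hmin⟩ := zorn_superset_nonempty S key E ⟨hE, subset_refl E⟩
  exact ⟨m, hmE, hmin.prop.1, fun F hF hFm =>
    hmin.eq_of_le ⟨hF, hFm.trans hmin.prop.2⟩ hFm ▸ rfl⟩
end

section
/- Let X be a metric space equipped with a convex bicombing, let C ⊆ X be a compact convex subset, and let (E_i) be a nonempty family of extremal subsets of C that is totally ordered (a chain) by inclusion. Then the intersection ⋂ E_i is a nonempty extremal subset of C. -/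
open Set

/-- The intersection of a nonempty chain of extremal subsets of a compact
convex set is a nonempty extremal subset. -/
theorem chain_iInter_extremal {X : Type*} [MetricSpace X]
    (B : ConvexBicombing X) (C : Set X) (hC : IsCompact C) (hCconv : B.IsConvexSet C)
    {ι : Type*} [Nonempty ι] (E : ι → Set X)
    (hE : ∀ i, B.IsExtremal C (E i))
    (hchain : ∀ i j, E i ⊆ E j ∨ E j ⊆ E i) :
    B.IsExtremal C (⋂ i, E i) := by
  refine ⟨isClosed_iInter fun i => (hE i).1, ?_, (iInter_subset E (Classical.arbitrary ι)).trans (hE _).2.2.1, ?_⟩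
  · exact IsCompact.nonempty_iInter_of_directed_nonempty_isCompact_isClosed E
      (fun i j => (hchain i j).elim (fun h => ⟨i, subset_rfl, h⟩) (fun h => ⟨j, h, subset_rfl⟩))
      (fun i => (hE i).2.1)
      (fun i => hC.of_isClosed_subset (hE i).1 (hE i).2.2.1)
      (fun i => (hE i).1)
  · intro x hx y hy ⟨t, ht, hmem⟩ s hs
    rw [mem_iInter] at hmem ⊢
    exact fun i => (hE i).2.2.2 x hx y hy ⟨t, ht, hmem i⟩ s hs
end

section
/- Let X be a metric space equipped with a convex bicombing and let C ⊆ X be a compact convex subset. If E ⊆ C is a minimal extremal subset of C (i.e. extremal and containing no proper extremal subset), then E consists of exactly one point; in particular, that point is an extremal point of C. -/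
open Set

/-
The distance to a fixed point is convex along bicombing paths, so on an extremal set the points
farthest from `p` again form an extremal set: a path meeting them at an interior time stays in the
extremal set, where the convex distance function is maximal at that interior time and hence
constant. Taking `p ∈ E` for a minimal `E`, all of `E` is at distance `dist p p = 0` from `p`.
-/

theorem ConvexOn.eq_of_isMaxOn_of_mem_Ioo {f : ℝ → ℝ} {a b s t : ℝ}
    (hf : ConvexOn ℝ (Icc a b) f) (hmax : IsMaxOn f (Icc a b) t) (ht : t ∈ Ioo a b)
    (hs : s ∈ Icc a b) : f s = f t := by
  have hab : a ≤ b := (ht.1.trans ht.2).le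
  refine le_antisymm (hmax hs) ?_
  rcases lt_trichotomy s t with hst | rfl | hts
  · refine hf.le_left_of_right_le hs (right_mem_Icc.2 hab) ?_ (hmax (right_mem_Icc.2 hab))
    rw [openSegment_eq_Ioo (hst.trans ht.2)]
    exact ⟨hst, ht.2⟩
  · exact le_rfl
  · refine hf.le_right_of_left_le (left_mem_Icc.2 hab) hs ?_ (hmax (left_mem_Icc.2 hab))
    rw [openSegment_eq_Ioo (ht.1.trans hts)]
    exact ⟨ht.1, hts⟩

namespace ConvexBicombing

variable {X : Type*} [MetricSpace X] (B : ConvexBicombing X)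

theorem convexOn_dist_path_left (x y p : X) :
    ConvexOn ℝ (Icc 0 1) (fun t => dist (B.path x y t) p) :=
  (B.dist_convexOn x y p p).congr fun t ht => by simp only [B.path_self p t ht]

variable {B}

theorem IsExtremal.isExtremal_sep_eq_of_isMaxOn {C E : Set X} {f : X → ℝ} {m : X}
    (hE : B.IsExtremal C E) (hf : Continuous f)
    (hconv : ∀ x y, ConvexOn ℝ (Icc 0 1) (fun t => f (B.path x y t)))
    (hm : m ∈ E) (hmax : IsMaxOn f E m) :
    B.IsExtremal C {z ∈ E | f z = f m} := by
  obtain ⟨hclosed, -, hEC, hext⟩ := hE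
  refine ⟨hclosed.inter (isClosed_eq hf continuous_const), ⟨m, hm, rfl⟩,
    fun z hz => hEC hz.1, ?_⟩
  rintro x hx y hy ⟨t, ht, htE, htm⟩ s hs
  have hpath : ∀ u ∈ Icc (0:ℝ) 1, B.path x y u ∈ E := hext x hx y hy ⟨t, ht, htE⟩
  have hmax_t : IsMaxOn (fun u => f (B.path x y u)) (Icc 0 1) t :=
    isMaxOn_iff.2 fun u hu => (isMaxOn_iff.1 hmax _ (hpath u hu)).trans htm.ge
  exact ⟨hpath s hs, ((hconv x y).eq_of_isMaxOn_of_mem_Ioo hmax_t ht hs).trans htm⟩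

end ConvexBicombing

theorem minimal_extremal_is_singleton_general {X : Type*} [MetricSpace X]
    (B : ConvexBicombing X) (C : Set X) (hC : IsCompact C)
    (E : Set X) (hE : B.IsExtremal C E)
    (hmin : ∀ F : Set X, B.IsExtremal C F → F ⊆ E → F = E) :
    ∃ p : X, E = {p} ∧ p ∈ C ∧ B.IsExtremal C {p} := by
  obtain ⟨hclosed, ⟨p, hp⟩, hEC, -⟩ := id hE
  have hdist : Continuous fun z => dist z p := continuous_id.dist continuous_const
  obtain ⟨m, hm, hmax⟩ :=
    (hC.of_isClosed_subset hclosed hEC).exists_isMaxOn ⟨p, hp⟩ hdist.continuousOn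
  have hfar : {z ∈ E | dist z p = dist m p} = E :=
    hmin _ (hE.isExtremal_sep_eq_of_isMaxOn hdist (B.convexOn_dist_path_left · · p) hm hmax)
      (sep_subset _ _)
  have hdist_eq : ∀ z ∈ E, dist z p = dist m p := fun z hz => by
    rw [← hfar] at hz
    exact hz.2
  have hEp : E = {p} := by
    refine eq_singleton_iff_unique_mem.2 ⟨hp, fun z hz => dist_eq_zero.1 ?_⟩
    rw [hdist_eq z hz, ← hdist_eq p hp, dist_self]
  exact ⟨p, hEp, hEC hp, hEp ▸ hE⟩

/-- A minimal extremal subset of a compact convex set is a singleton, whose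
element is an extremal point of `C`. -/
theorem minimal_extremal_is_singleton {X : Type*} [MetricSpace X]
    (B : ConvexBicombing X) (C : Set X) (hC : IsCompact C) (hCconv : B.IsConvexSet C)
    (E : Set X) (hE : B.IsExtremal C E)
    (hmin : ∀ F : Set X, B.IsExtremal C F → F ⊆ E → F = E) :
    ∃ p : X, E = {p} ∧ p ∈ C ∧ B.IsExtremal C {p} :=
  minimal_extremal_is_singleton_general B C hC E hE hmin
end

section
/- Let (X,d) be a convex metric space, i.e. a metric space in which any two points are connected by a geodesic and such that for all linearly parameterized geodesics c, c' : [0,1] → X and all t ∈ [0,1] one has d(c(t), c'(t)) ≤ (1−t)·d(c(0), c'(0)) + t·d(c(1), c'(1)) (this class includes all CAT(0) spaces). Let C ⊆ X be a compact subset that is geodesically convex, i.e. for all x, y ∈ C the unique linearly parameterized geodesic from x to y lies in C. Then C is the smallest closed geodesically convex subset of X containing all extremal points of C. -/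
open Set

/-- `c : ℝ → X` is (on `[0,1]`) a linearly parameterized geodesic from `x` to
`y`: `c 0 = x`, `c 1 = y`, and `d(c s, c t) = |s - t| · d(x, y)` for
`s, t ∈ [0,1]`. -/
def IsLinGeodesic {X : Type*} [MetricSpace X] (x y : X) (c : ℝ → X) : Prop :=
  c 0 = x ∧ c 1 = y ∧
    ∀ s ∈ Icc (0:ℝ) 1, ∀ t ∈ Icc (0:ℝ) 1, dist (c s) (c t) = |s - t| * dist x y

/-- A set `C` is geodesically convex if every linearly parameterized geodesic
between points of `C` stays in `C`. -/
def GeodesicallyConvex {X : Type*} [MetricSpace X] (C : Set X) : Prop :=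
  ∀ x ∈ C, ∀ y ∈ C, ∀ c : ℝ → X, IsLinGeodesic x y c → ∀ t ∈ Icc (0:ℝ) 1, c t ∈ C

/-- `p` is an extremal point of `C`: `p ∈ C`, and whenever a geodesic between
points of `C` passes through `p` at an interior parameter, both endpoints
equal `p`. -/
def IsExtremalPoint {X : Type*} [MetricSpace X] (C : Set X) (p : X) : Prop :=
  p ∈ C ∧ ∀ x ∈ C, ∀ y ∈ C, ∀ c : ℝ → X, IsLinGeodesic x y c →
    ∀ t ∈ Ioo (0:ℝ) 1, c t = p → x = p ∧ y = p

/-- A face of `C`: a subset such that any geodesic between points of `C`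
passing through it at an interior parameter has both endpoints in it. -/
def IsFaceOf {X : Type*} [MetricSpace X] (C F : Set X) : Prop :=
  F ⊆ C ∧ ∀ x ∈ C, ∀ y ∈ C, ∀ c : ℝ → X, IsLinGeodesic x y c →
    ∀ t ∈ Ioo (0:ℝ) 1, c t ∈ F → x ∈ F ∧ y ∈ F

lemma isLinGeodesic_const {X : Type*} [MetricSpace X] (a : X) :
    IsLinGeodesic a a (fun _ => a) := ⟨rfl, rfl, by simp⟩

/-- Convexity of the distance to a point along geodesics. -/
lemma dist_convex {X : Type*} [MetricSpace X]
    (hconv : ∀ (x y x' y' : X) (c c' : ℝ → X),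
      IsLinGeodesic x y c → IsLinGeodesic x' y' c' → ∀ t ∈ Icc (0:ℝ) 1,
        dist (c t) (c' t) ≤ (1 - t) * dist x x' + t * dist y y')
    {x y : X} {c : ℝ → X} (hc : IsLinGeodesic x y c) (a : X) {t : ℝ}
    (ht : t ∈ Icc (0:ℝ) 1) :
    dist (c t) a ≤ (1 - t) * dist x a + t * dist y a :=
  hconv x y a a c (fun _ => a) hc (isLinGeodesic_const a) t ht

/-- Convexity of the distance to a geodesically convex set along geodesics. -/
lemma infDist_convex {X : Type*} [MetricSpace X]
    (hexist : ∀ x y : X, ∃ c : ℝ → X, IsLinGeodesic x y c)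
    (hconv : ∀ (x y x' y' : X) (c c' : ℝ → X),
      IsLinGeodesic x y c → IsLinGeodesic x' y' c' → ∀ t ∈ Icc (0:ℝ) 1,
        dist (c t) (c' t) ≤ (1 - t) * dist x x' + t * dist y y')
    {D : Set X} (hDne : D.Nonempty) (hD : GeodesicallyConvex D)
    {x y : X} {c : ℝ → X} (hc : IsLinGeodesic x y c) {t : ℝ}
    (ht : t ∈ Icc (0:ℝ) 1) :
    Metric.infDist (c t) D ≤ (1 - t) * Metric.infDist x D + t * Metric.infDist y D := by
  refine le_of_forall_pos_le_add fun ε hε => ?_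
  obtain ⟨p, hpD, hp⟩ := (Metric.infDist_lt_iff hDne).1
    (lt_add_of_pos_right (Metric.infDist x D) hε)
  obtain ⟨q, hqD, hq⟩ := (Metric.infDist_lt_iff hDne).1
    (lt_add_of_pos_right (Metric.infDist y D) hε)
  obtain ⟨g, hg⟩ := hexist p q
  have hgt : g t ∈ D := hD p hpD q hqD g hg t ht
  have h1 : (0:ℝ) ≤ 1 - t := by linarith [ht.2]
  calc Metric.infDist (c t) D ≤ dist (c t) (g t) := Metric.infDist_le_dist_of_mem hgt
    _ ≤ (1 - t) * dist x p + t * dist y q := hconv x y p q c g hc hg t ht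
    _ ≤ (1 - t) * (Metric.infDist x D + ε) + t * (Metric.infDist y D + ε) := by
        exact add_le_add (mul_le_mul_of_nonneg_left hp.le h1)
          (mul_le_mul_of_nonneg_left hq.le ht.1)
    _ = (1 - t) * Metric.infDist x D + t * Metric.infDist y D + ε := by ring

/-- The set of maximizers over a face of a continuous geodesically convex
function is again a face. -/
lemma argmax_face_s10 {X : Type*} [MetricSpace X] {C F : Set X}
    (hF : IsFaceOf C F) {f : X → ℝ}
    (hfconv : ∀ x ∈ C, ∀ y ∈ C, ∀ c : ℝ → X, IsLinGeodesic x y c →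
      ∀ t ∈ Icc (0:ℝ) 1, f (c t) ≤ (1 - t) * f x + t * f y)
    {M : ℝ} (hmax : ∀ w ∈ F, f w ≤ M) :
    IsFaceOf C {w ∈ F | f w = M} := by
  refine ⟨fun w hw => hF.1 hw.1, ?_⟩
  rintro x hx y hy c hc t ht ⟨hctF, hctM⟩
  obtain ⟨hxF, hyF⟩ := hF.2 x hx y hy c hc t ht hctF
  have hfx := hmax x hxF
  have hfy := hmax y hyF
  have hcv := hfconv x hx y hy c hc t ⟨ht.1.le, ht.2.le⟩
  have h1t : (0:ℝ) < 1 - t := by linarith [ht.2]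
  have hxM : f x = M := by nlinarith [ht.1]
  have hyM : f y = M := by nlinarith [ht.1]
  exact ⟨⟨hxF, hxM⟩, ⟨hyF, hyM⟩⟩

/-- Every nonempty compact face contains an extremal point. -/
lemma exists_extremal {X : Type*} [MetricSpace X]
    (hconv : ∀ (x y x' y' : X) (c c' : ℝ → X),
      IsLinGeodesic x y c → IsLinGeodesic x' y' c' → ∀ t ∈ Icc (0:ℝ) 1,
        dist (c t) (c' t) ≤ (1 - t) * dist x x' + t * dist y y')
    {C F : Set X} (hF : IsFaceOf C F) (hFc : IsCompact F) (hFne : F.Nonempty) :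
    ∃ p ∈ F, IsExtremalPoint C p := by
  set S : Set (Set X) := {G | G.Nonempty ∧ IsCompact G ∧ IsFaceOf C G} with hS
  have hFS : F ∈ S := ⟨hFne, hFc, hF⟩
  have key : ∀ ch ⊆ S, IsChain (· ⊆ ·) ch → ch.Nonempty →
      ∃ lb ∈ S, ∀ s ∈ ch, lb ⊆ s := by
    intro ch hchS hch hchne
    refine ⟨⋂₀ ch, ⟨?_, ?_, ?_⟩, fun s hs => sInter_subset_of_mem hs⟩
    · have : Nonempty ch := hchne.to_subtype
      have hdir : DirectedOn (· ⊇ ·) ch := fun a hA b hB =>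
        (hch.total hA hB).elim (fun h => ⟨a, hA, Subset.rfl, h⟩)
          (fun h => ⟨b, hB, h, Subset.rfl⟩)
      exact IsCompact.nonempty_sInter_of_directed_nonempty_isCompact_isClosed hdir
        (fun U hU => (hchS hU).1) (fun U hU => (hchS hU).2.1)
        (fun U hU => (hchS hU).2.1.isClosed)
    · obtain ⟨G, hG⟩ := hchne
      exact ((hchS hG).2.1.of_isClosed_subset
        (isClosed_sInter fun U hU => (hchS hU).2.1.isClosed)
        (sInter_subset_of_mem hG))
    · constructor
      · obtain ⟨G, hG⟩ := hchne
        exact (sInter_subset_of_mem hG).trans (hchS hG).2.2.1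
      · intro x hx y hy c hc t ht hct
        constructor <;>
        · intro G hG
          have := ((hchS hG).2.2).2 x hx y hy c hc t ht (hct G hG)
          tauto
  obtain ⟨m, hmF, hmS, hmmin⟩ := zorn_superset_nonempty S key F hFS
  · obtain ⟨hmne, hmc, hmface⟩ := hmS
    obtain ⟨a, ha⟩ := hmne
    -- maximize dist to a over m
    have hcont : ContinuousOn (fun w => dist w a) m := (continuous_id.dist continuous_const).continuousOn
    obtain ⟨z, hz, hzmax⟩ := hmc.exists_isMaxOn ⟨a, ha⟩ hcont
    set M := dist z a with hM
    have hmax : ∀ w ∈ m, dist w a ≤ M := fun w hw => hzmax hw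
    set F₁ : Set X := {w ∈ m | dist w a = M} with hF₁
    have hF₁face : IsFaceOf C F₁ := by
      refine argmax_face_s10 hmface ?_ hmax
      intro x hx y hy c hc t ht
      exact dist_convex hconv hc a ht
    have hF₁S : F₁ ∈ S := by
      refine ⟨⟨z, hz, rfl⟩, ?_, hF₁face⟩
      exact hmc.of_isClosed_subset
        (hmc.isClosed.inter (isClosed_eq (continuous_id.dist continuous_const) continuous_const))
        (fun w hw => hw.1)
    have hF₁m : F₁ = m := subset_antisymm (fun w hw => hw.1) (hmmin hF₁S (fun w hw => hw.1))
    have haF₁ : a ∈ F₁ := hF₁m ▸ ha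
    have hM0 : M = 0 := by simpa using haF₁.2.symm
    have hsingle : ∀ w ∈ m, w = a := by
      intro w hw
      have := hmax w hw
      rw [hM0] at this
      exact dist_le_zero.1 this
    refine ⟨a, hmF ha, hmface.1 ha, ?_⟩
    intro x hx y hy c hc t ht hct
    have hctm : c t ∈ m := hct ▸ ha
    obtain ⟨hxm, hym⟩ := hmface.2 x hx y hy c hc t ht hctm
    exact ⟨hsingle x hxm, hsingle y hym⟩

/-- Kreĭn-Mil'man for convex metric spaces: a compact geodesically convex
subset is the smallest closed geodesically convex set containing its extremal
points. -/
theorem krein_milman_convex_metric_space {X : Type*} [MetricSpace X]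
    (hexist : ∀ x y : X, ∃ c : ℝ → X, IsLinGeodesic x y c)
    (hconv : ∀ (x y x' y' : X) (c c' : ℝ → X),
      IsLinGeodesic x y c → IsLinGeodesic x' y' c' → ∀ t ∈ Icc (0:ℝ) 1,
        dist (c t) (c' t) ≤ (1 - t) * dist x x' + t * dist y y')
    (C : Set X) (hC : IsCompact C) (hCconv : GeodesicallyConvex C) :
    C = ⋂₀ {D : Set X | IsClosed D ∧ GeodesicallyConvex D ∧
      {p : X | IsExtremalPoint C p} ⊆ D} := by
  apply Subset.antisymm
  · intro x hx
    rw [mem_sInter]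
    rintro D ⟨hDcl, hDconv, hDext⟩
    by_contra hxD
    -- C is a face of itself
    have hCface : IsFaceOf C C := ⟨Subset.rfl, fun x hx y hy _ _ _ _ _ => ⟨hx, hy⟩⟩
    have hCne : C.Nonempty := ⟨x, hx⟩
    -- D is nonempty since it contains an extremal point of C
    obtain ⟨p₀, _, hp₀ext⟩ := exists_extremal hconv hCface hC hCne
    have hDne : D.Nonempty := ⟨p₀, hDext hp₀ext⟩
    -- maximize infDist to D over C
    set f : X → ℝ := fun w => Metric.infDist w D with hf
    have hfcont : Continuous f := Metric.continuous_infDist_pt D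
    obtain ⟨z, hzC, hzmax⟩ := hC.exists_isMaxOn hCne hfcont.continuousOn
    have hmax : ∀ w ∈ C, f w ≤ f z := fun w hw => hzmax hw
    have hfx : 0 < f x := (hDcl.notMem_iff_infDist_pos hDne).1 hxD
    have hMpos : 0 < f z := lt_of_lt_of_le hfx (hmax x hx)
    -- the argmax set is a nonempty compact face
    have hF₁face : IsFaceOf C {w ∈ C | f w = f z} := by
      refine argmax_face_s10 hCface ?_ hmax
      intro x hx y hy c hc t ht
      exact infDist_convex hexist hconv hDne hDconv hc ht
    have hF₁c : IsCompact {w ∈ C | f w = f z} :=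
      hC.of_isClosed_subset (hC.isClosed.inter (isClosed_eq hfcont continuous_const))
        (fun w hw => hw.1)
    obtain ⟨q, hqF₁, hqext⟩ := exists_extremal hconv hF₁face hF₁c ⟨z, hzC, rfl⟩
    have hqD : q ∈ D := hDext hqext
    have : f q = 0 := Metric.infDist_zero_of_mem hqD
    rw [hqF₁.2] at this
    exact absurd this (ne_of_gt hMpos)
  · exact sInter_subset_of_mem ⟨hC.isClosed, hCconv, fun p hp => hp.1⟩
end
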